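/- If τ is a permutation such that P(τ) contains no 231-chain, then P(τ) has a linear extension that avoids the pattern 231. -/

import Mathlib

/-- A permutation of length `n` (a bijection of `{0, …, n-1}`, identified with the
sequence of its values), packaged with its length. -/
abbrev PermSig : Type := Σ n : ℕ, Equiv.Perm (Fin n)

/-- Pattern containment: the permutation `α` of length `k` is contained in the
permutation `τ` of length `n` if there is an increasing choice of positions on which
`τ` is order-isomorphic to `α`. -/
def Contains {k n : ℕ} (α : Equiv.Perm (Fin k)) (τ : Equiv.Perm (Fin n)) : Prop :=
  ∃ f : Fin k ↪o Fin n, ∀ i j : Fin k, α i < α j ↔ τ (f i) < τ (f j)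

/-- The avoidance class `Av B`: all permutations containing no member of `B`. -/
def Av (B : Set PermSig) : Set PermSig :=
  {τ : PermSig | ∀ β ∈ B, ¬ Contains β.2 τ.2}

/-- A pattern class: a set of permutations downward closed under pattern containment. -/
def IsPatternClass (C : Set PermSig) : Prop :=
  ∀ (k n : ℕ) (α : Equiv.Perm (Fin k)) (τ : Equiv.Perm (Fin n)),
    Contains α τ → (⟨n, τ⟩ : PermSig) ∈ C → (⟨k, α⟩ : PermSig) ∈ C

/-- The base relation of the poset `P(τ)` on values: `x ≺ y` whenever `x` appears
before `y` in `τ` and either `x > y`, or some value `z` appears between `x` and `y`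
in `τ` with `x < y < z`. -/
def PQBase {n : ℕ} (τ : Equiv.Perm (Fin n)) (x y : Fin n) : Prop :=
  τ.symm x < τ.symm y ∧
    (y < x ∨ ∃ z : Fin n, τ.symm x < τ.symm z ∧ τ.symm z < τ.symm y ∧ x < y ∧ y < z)

/-- The poset `P(τ)`: the transitive closure of the base relation. -/
def PQ {n : ℕ} (τ : Equiv.Perm (Fin n)) : Fin n → Fin n → Prop :=
  Relation.TransGen (PQBase τ)

/-- `σ` is a linear extension of `P(τ)`; equivalently, `(σ, τ)` is an allowable pair,
i.e. a priority queue can produce output `τ` from input `σ`. -/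
def Allowable {n : ℕ} (σ τ : Equiv.Perm (Fin n)) : Prop :=
  ∀ x y : Fin n, PQ τ x y → σ.symm x < σ.symm y

/-- `C𝒜`: the set of permutations obtainable by a priority queue from an input in `C`. -/
def ImageA (C : Set PermSig) : Set PermSig :=
  {τ : PermSig | ∃ σ : Equiv.Perm (Fin τ.1), (⟨τ.1, σ⟩ : PermSig) ∈ C ∧ Allowable σ τ.2}

/-- `P(τ)` has an `α`-chain: values `a 0 ≺ a 1 ≺ … ≺ a (k-1)` forming a chain of
`P(τ)` whose pattern is `α`. -/
def HasChain {k n : ℕ} (α : Equiv.Perm (Fin k)) (τ : Equiv.Perm (Fin n)) : Prop :=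
  ∃ a : Fin k → Fin n,
    (∀ i j : Fin k, i < j → PQ τ (a i) (a j)) ∧
    (∀ i j : Fin k, a i < a j ↔ α i < α j)

/-- The pattern `231` (written 0-indexed). -/
noncomputable def p231 : Equiv.Perm (Fin 3) :=
  Equiv.ofBijective (![1, 2, 0] : Fin 3 → Fin 3) (by decide)
/-!
Let `m` be the largest value of `τ = L m R`. In `P(τ)` every value of `L` precedes every value
of `R`, `m` precedes `R` and is incomparable with `L`, and the relations inside `L` and `R` are
those of `P(L)` and `P(R)`. A linear extension is therefore built recursively: an extension of
`L` with `m` inserted, followed by an extension of `R`.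

To avoid 231 the induction is strengthened by an upper set `U` of values on which `P` has no
increasing relation. The extension must list `U` in decreasing order and respect every cut `c`
(no relation descends across `c`, and no value of `U` lies at or below `c` while some value lies
above it) by listing the values `≤ c` before those `> c`. For `L` the set `U` grows by everything
above a value of `R`: an increasing relation there would extend to a 231-chain. The value `m` is
inserted right after the values of `L` below a cut under `m`. A 231 pattern `b c a` with `b` in
`L` and `c, a` in `R` cannot occur because `b` is a cut for `R`.
-/

namespace PQ231

open Finset Function

variable {α β : Type*} [LinearOrder β]

def left (p : α → β) (s : Finset α) (m : α) : Finset α := s.filter (p · < p m)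

def right (p : α → β) (s : Finset α) (m : α) : Finset α := s.filter (p m < p ·)

section Split

variable {p : α → β} {s : Finset α} {m x : α}

theorem mem_left : x ∈ left p s m ↔ x ∈ s ∧ p x < p m := mem_filter

theorem mem_right : x ∈ right p s m ↔ x ∈ s ∧ p m < p x := mem_filter

theorem left_subset : left p s m ⊆ s := filter_subset _ _

theorem right_subset : right p s m ⊆ s := filter_subset _ _

theorem left_ssubset (hm : m ∈ s) : left p s m ⊂ s := filter_ssubset.2 ⟨m, hm, lt_irrefl _⟩

theorem right_ssubset (hm : m ∈ s) : right p s m ⊂ s := filter_ssubset.2 ⟨m, hm, lt_irrefl _⟩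

theorem notMem_left_of_mem_right (hx : x ∈ right p s m) : x ∉ left p s m :=
  fun hx' => (mem_right.1 hx).2.not_gt (mem_left.1 hx').2

theorem mem_left_or_eq_or_mem_right (hp : Injective p) (hx : x ∈ s) :
    x ∈ left p s m ∨ x = m ∨ x ∈ right p s m := by
  rcases lt_trichotomy (p x) (p m) with h | h | h
  exacts [.inl (mem_left.2 ⟨hx, h⟩), .inr (.inl (hp h)), .inr (.inr (mem_right.2 ⟨hx, h⟩))]

end Split

variable [LinearOrder α]

/-- The base relation of `P(τ)` restricted to a set `s` of values, `p x` being the position of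
the value `x` in `τ`. -/
def Prec (p : α → β) (s : Finset α) (x y : α) : Prop :=
  x ∈ s ∧ y ∈ s ∧ p x < p y ∧ (y < x ∨ ∃ z ∈ s, p x < p z ∧ p z < p y ∧ x < y ∧ y < z)

def NoChain231 (p : α → β) (s : Finset α) : Prop :=
  ∀ ⦃u v w⦄, Prec p s u v → Prec p s v w → w < u → ¬ u < v

def NoRise (p : α → β) (s : Finset α) (U : Set α) : Prop :=
  ∀ ⦃x y⦄, Prec p s x y → x ∈ U → ¬ x < y

structure IsCut (p : α → β) (s : Finset α) (U : Set α) (c : α) : Prop where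
  not_prec : ∀ ⦃u v⦄, Prec p s v u → u ≤ c → ¬ c < v
  not_upper : ∀ ⦃x y⦄, x ∈ s → y ∈ s → x ∈ U → x ≤ c → ¬ c < y

/-- `q x < q y` means that `x` is listed before `y`. Ranks are lists, compared
lexicographically, so that extensions of two parts can be glued by prefixing a block index. -/
structure IsExtension231 (p : α → β) (s : Finset α) (U : Set α) (q : α → List ℕ) : Prop where
  injOn : Set.InjOn q s
  lt_of_prec : ∀ ⦃x y⦄, Prec p s x y → q x < q y
  no231 : ∀ ⦃a b c⦄, a ∈ s → b ∈ s → c ∈ s → a < b → b < c → q b < q c → ¬ q c < q a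
  lt_of_mem_upper : ∀ ⦃x y⦄, x ∈ s → y ∈ s → x ∈ U → x < y → q y < q x
  lt_of_isCut : ∀ ⦃c⦄, IsCut p s U c → ∀ ⦃x y⦄, x ∈ s → y ∈ s → x ≤ c → c < y → q x < q y

section Restrict

variable {p : α → β} {s t : Finset α} {U : Set α} {x y c : α}

theorem Prec.mono (hts : t ⊆ s) (h : Prec p t x y) : Prec p s x y := by
  obtain ⟨hx, hy, hxy, h | ⟨z, hz, hz'⟩⟩ := h
  exacts [⟨hts hx, hts hy, hxy, .inl h⟩, ⟨hts hx, hts hy, hxy, .inr ⟨z, hts hz, hz'⟩⟩]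

theorem prec_iff_of_convex (hts : t ⊆ s)
    (ht : ∀ ⦃x y z⦄, x ∈ t → y ∈ t → z ∈ s → p x < p z → p z < p y → z ∈ t) :
    Prec p t x y ↔ x ∈ t ∧ y ∈ t ∧ Prec p s x y := by
  refine ⟨fun h => ⟨h.1, h.2.1, h.mono hts⟩, ?_⟩
  rintro ⟨hx, hy, -, -, hxy, h | ⟨z, hz, hxz, hzy, hz'⟩⟩
  exacts [⟨hx, hy, hxy, .inl h⟩, ⟨hx, hy, hxy, .inr ⟨z, ht hx hy hz hxz hzy, hxz, hzy, hz'⟩⟩]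

theorem NoChain231.mono (hts : t ⊆ s) (h : NoChain231 p s) : NoChain231 p t :=
  fun _ _ _ huv hvw => h (huv.mono hts) (hvw.mono hts)

theorem NoRise.mono (hts : t ⊆ s) (h : NoRise p s U) : NoRise p t U :=
  fun _ _ hxy => h (hxy.mono hts)

theorem IsCut.mono (hts : t ⊆ s) (h : IsCut p s U c) : IsCut p t U c :=
  ⟨fun _ _ hvu => h.not_prec (hvu.mono hts), fun _ _ hx hy => h.not_upper (hts hx) (hts hy)⟩

end Restrict

def upperLeft (p : α → β) (s : Finset α) (U : Set α) (m : α) : Set α :=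
  U ∪ {x | ∃ r ∈ right p s m, r < x}

section LeftRight

variable {p : α → β} {s : Finset α} {U : Set α} {m x y b c : α}

theorem prec_left_iff :
    Prec p (left p s m) x y ↔ x ∈ left p s m ∧ y ∈ left p s m ∧ Prec p s x y :=
  prec_iff_of_convex left_subset fun _ _ _ _ hy hz _ hzy =>
    mem_left.2 ⟨hz, hzy.trans (mem_left.1 hy).2⟩

theorem prec_right_iff :
    Prec p (right p s m) x y ↔ x ∈ right p s m ∧ y ∈ right p s m ∧ Prec p s x y :=
  prec_iff_of_convex right_subset fun _ _ _ hx _ hz hxz _ =>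
    mem_right.2 ⟨hz, (mem_right.1 hx).2.trans hxz⟩

theorem lt_of_mem_left (hm : m ∈ upperBounds (s : Set α)) (hx : x ∈ left p s m) : x < m :=
  (hm (mem_left.1 hx).1).lt_of_ne fun h => (mem_left.1 hx).2.ne (by rw [h])

theorem lt_of_mem_right (hm : m ∈ upperBounds (s : Set α)) (hx : x ∈ right p s m) : x < m :=
  (hm (mem_right.1 hx).1).lt_of_ne fun h => (mem_right.1 hx).2.ne (by rw [h])

theorem not_prec_max (hm : m ∈ upperBounds (s : Set α)) : ¬ Prec p s x m := by
  rintro ⟨hx, -, -, h | ⟨z, hz, -, -, -, hmz⟩⟩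
  exacts [(hm hx).not_gt h, (hm hz).not_gt hmz]

theorem prec_max_of_mem_right (hm : IsGreatest (s : Set α) m) (hy : y ∈ right p s m) :
    Prec p s m y :=
  ⟨hm.1, (mem_right.1 hy).1, (mem_right.1 hy).2, .inl (lt_of_mem_right hm.2 hy)⟩

theorem prec_of_mem_left_of_mem_right (hm : IsGreatest (s : Set α) m) (hx : x ∈ left p s m)
    (hy : y ∈ right p s m) : Prec p s x y := by
  have hxy : p x < p y := (mem_left.1 hx).2.trans (mem_right.1 hy).2
  refine ⟨(mem_left.1 hx).1, (mem_right.1 hy).1, hxy, ?_⟩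
  rcases lt_or_gt_of_ne (ne_of_apply_ne p hxy.ne') with h | h
  · exact .inl h
  · exact .inr ⟨m, hm.1, (mem_left.1 hx).2, (mem_right.1 hy).2, h, lt_of_mem_right hm.2 hy⟩

theorem isUpperSet_upperLeft (hU : IsUpperSet U) : IsUpperSet (upperLeft p s U m) :=
  hU.union fun _ _ hab ⟨r, hr, hra⟩ => ⟨r, hr, hra.trans_le hab⟩

theorem noRise_left (hm : IsGreatest (s : Set α) m) (hs : NoChain231 p s) (h : NoRise p s U) :
    NoRise p (left p s m) (upperLeft p s U m) := by
  rintro x y hxy (hx | ⟨r, hr, hrx⟩)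
  · exact h (prec_left_iff.1 hxy).2.2 hx
  · obtain ⟨-, hy, hxy⟩ := prec_left_iff.1 hxy
    exact hs hxy (prec_of_mem_left_of_mem_right hm hy hr) hrx

theorem IsCut.left (hm : IsGreatest (s : Set α) m) (h : IsCut p s U c) :
    IsCut p (left p s m) (upperLeft p s U m) c where
  not_prec _ _ hvu := h.not_prec (prec_left_iff.1 hvu).2.2
  not_upper x y hx hy := by
    rintro (hxU | ⟨r, hr, hrx⟩) hxc
    · exact h.not_upper (left_subset hx) (left_subset hy) hxU hxc
    · exact h.not_prec (prec_of_mem_left_of_mem_right hm hy hr) (hrx.le.trans hxc)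

theorem isCut_right_of_mem_left (hm : IsGreatest (s : Set α) m) (hs : NoChain231 p s)
    (h : NoRise p s U) (hU : IsUpperSet U) (hb : b ∈ left p s m) : IsCut p (right p s m) U b where
  not_prec u v hvu hub := by
    obtain ⟨hv, hu, hvu⟩ := prec_right_iff.1 hvu
    have hub : u < b := hub.lt_of_ne (by rintro rfl; exact notMem_left_of_mem_right hu hb)
    exact hs (prec_of_mem_left_of_mem_right hm hb hv) hvu hub
  not_upper _ y _ hy hxU hxb := h (prec_of_mem_left_of_mem_right hm hb hy) (hU hxb hxU)

end LeftRight

def IsBelowCut (p : α → β) (s : Finset α) (U : Set α) (m x : α) : Prop :=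
  x ∈ left p s m ∧ ∃ c < m, IsCut p s U c ∧ x ≤ c

open Classical in
noncomputable def block (p : α → β) (s : Finset α) (U : Set α) (m x : α) : ℕ :=
  if IsBelowCut p s U m x then 0 else if x = m then 1 else if x ∈ left p s m then 2 else 3

open Classical in
noncomputable def glue (p : α → β) (s : Finset α) (U : Set α) (m : α) (qL qR : α → List ℕ)
    (x : α) : List ℕ :=
  block p s U m x :: if x ∈ right p s m then qR x else qL x

section Glue

variable {p : α → β} {s : Finset α} {U : Set α} {m x y : α} {qL qR : α → List ℕ}

theorem IsBelowCut.mem_left (hx : IsBelowCut p s U m x) : x ∈ left p s m := hx.1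

theorem IsBelowCut.of_le (hx : x ∈ left p s m) (hy : IsBelowCut p s U m y) (hxy : x ≤ y) :
    IsBelowCut p s U m x :=
  ⟨hx, hy.2.imp fun _ ⟨hcm, hc, hyc⟩ => ⟨hcm, hc, hxy.trans hyc⟩⟩

theorem IsBelowCut.of_prec (hx : x ∈ left p s m) (hy : IsBelowCut p s U m y) (hxy : Prec p s x y) :
    IsBelowCut p s U m x := by
  obtain ⟨-, c, hcm, hc, hyc⟩ := hy
  exact ⟨hx, c, hcm, hc, le_of_not_gt (hc.not_prec hxy hyc)⟩

theorem IsBelowCut.lt_of_mem_right (hm : IsGreatest (s : Set α) m) (hx : IsBelowCut p s U m x)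
    (hy : y ∈ right p s m) : x < y := by
  obtain ⟨-, c, hcm, hc, hxc⟩ := hx
  exact lt_of_not_ge fun hyx => hc.not_prec (prec_max_of_mem_right hm hy) (hyx.trans hxc) hcm

theorem IsBelowCut.notMem (hm : m ∈ s) (hx : IsBelowCut p s U m x) : x ∉ U := by
  obtain ⟨hxL, c, hcm, hc, hxc⟩ := hx
  exact fun hxU => hc.not_upper (left_subset hxL) hm hxU hxc hcm

theorem block_of_isBelowCut (hx : IsBelowCut p s U m x) : block p s U m x = 0 := if_pos hx

theorem block_max : block p s U m m = 1 := by
  have : ¬ IsBelowCut p s U m m := fun h => lt_irrefl _ (mem_left.1 h.mem_left).2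
  simp [block, this]

theorem block_of_mem_left (hx : x ∈ left p s m) (hbelow : ¬ IsBelowCut p s U m x) :
    block p s U m x = 2 := by
  have : x ≠ m := by rintro rfl; exact lt_irrefl _ (mem_left.1 hx).2
  simp [block, hbelow, this, hx]

theorem block_of_mem_right (hx : x ∈ right p s m) : block p s U m x = 3 := by
  have hxL := notMem_left_of_mem_right hx
  have : x ≠ m := by rintro rfl; exact lt_irrefl _ (mem_right.1 hx).2
  rw [block, if_neg (fun h => hxL h.mem_left), if_neg this, if_neg hxL]

theorem block_le_two_of_mem_left (hx : x ∈ left p s m) : block p s U m x ≤ 2 := by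
  by_cases hbelow : IsBelowCut p s U m x
  · simp [block_of_isBelowCut hbelow]
  · simp [block_of_mem_left hx hbelow]

theorem isBelowCut_of_block_eq_zero (h : block p s U m x = 0) : IsBelowCut p s U m x := by
  by_contra hbelow
  simp only [block, if_neg hbelow] at h
  split_ifs at h

theorem block_eq_one_iff (hp : Injective p) (hx : x ∈ s) : block p s U m x = 1 ↔ x = m := by
  refine ⟨fun h => ?_, fun h => h ▸ block_max⟩
  rcases mem_left_or_eq_or_mem_right (m := m) hp hx with hxL | rfl | hxR
  · by_cases hbelow : IsBelowCut p s U m x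
    · simp [block_of_isBelowCut hbelow] at h
    · simp [block_of_mem_left hxL hbelow] at h
  · rfl
  · simp [block_of_mem_right hxR] at h

theorem mem_right_of_three_le_block (hp : Injective p) (hx : x ∈ s)
    (h : 3 ≤ block p s U m x) : x ∈ right p s m := by
  rcases mem_left_or_eq_or_mem_right (m := m) hp hx with hxL | rfl | hxR
  · exact absurd h (by have := block_le_two_of_mem_left (U := U) hxL; omega)
  · simp [block_max] at h
  · exact hxR

theorem mem_left_of_block_eq (hp : Injective p) (hx : x ∈ left p s m) (hy : y ∈ s)
    (h : block p s U m x = block p s U m y) : y ∈ left p s m := by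
  rcases mem_left_or_eq_or_mem_right (m := m) hp hy with hyL | hym | hyR
  · exact hyL
  · rw [hym, block_max] at h
    by_cases hbelow : IsBelowCut p s U m x
    · simp [block_of_isBelowCut hbelow] at h
    · simp [block_of_mem_left hx hbelow] at h
  · have := block_le_two_of_mem_left (U := U) hx
    simp [block_of_mem_right hyR] at h
    omega

theorem block_le_of_mem_left (hx : x ∈ left p s m) (hy : y ∈ left p s m)
    (hbelow : IsBelowCut p s U m y → IsBelowCut p s U m x) : block p s U m x ≤ block p s U m y := by
  by_cases hy' : IsBelowCut p s U m y
  · simp [block_of_isBelowCut hy', block_of_isBelowCut (hbelow hy')]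
  · simp [block_of_mem_left hy hy', block_le_two_of_mem_left hx]

theorem glue_of_mem_left (hx : x ∈ left p s m) :
    glue p s U m qL qR x = block p s U m x :: qL x := by
  simp [glue, notMem_left_of_mem_right.mt (not_not.2 hx)]

theorem glue_of_mem_right (hx : x ∈ right p s m) : glue p s U m qL qR x = 3 :: qR x := by
  simp [glue, hx, block_of_mem_right hx]

theorem block_le_of_glue_lt (h : glue p s U m qL qR x < glue p s U m qL qR y) :
    block p s U m x ≤ block p s U m y :=
  List.head_le_of_lt h

theorem glue_lt_of_block_lt (h : block p s U m x < block p s U m y) :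
    glue p s U m qL qR x < glue p s U m qL qR y :=
  List.cons_lt_cons_iff.2 (.inl h)

theorem glue_lt_glue_of_mem_left (hx : x ∈ left p s m) (hy : y ∈ left p s m) 
    (hb : block p s U m x = block p s U m y) :
    glue p s U m qL qR x < glue p s U m qL qR y ↔ qL x < qL y := by
  simp [glue_of_mem_left hx, glue_of_mem_left hy, hb]

theorem glue_lt_glue_of_mem_right (hx : x ∈ right p s m) (hy : y ∈ right p s m) :
    glue p s U m qL qR x < glue p s U m qL qR y ↔ qR x < qR y := by
  simp [glue_of_mem_right hx, glue_of_mem_right hy]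

theorem glue_lt_of_mem_left (hx : x ∈ left p s m) (hy : y ∈ left p s m)
    (hbelow : IsBelowCut p s U m y → IsBelowCut p s U m x) (h : qL x < qL y) :
    glue p s U m qL qR x < glue p s U m qL qR y := by
  rw [glue_of_mem_left hx, glue_of_mem_left hy, List.cons_lt_cons_iff]
  exact (block_le_of_mem_left hx hy hbelow).lt_or_eq.imp_right (⟨·, h⟩)

theorem glue_lt_of_mem_left_of_mem_right (hx : x ∈ left p s m) (hy : y ∈ right p s m) :
    glue p s U m qL qR x < glue p s U m qL qR y :=
  glue_lt_of_block_lt <| (block_le_two_of_mem_left hx).trans_lt (by simp [block_of_mem_right hy])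

theorem glue_max_lt_of_mem_right (hy : y ∈ right p s m) :
    glue p s U m qL qR m < glue p s U m qL qR y :=
  glue_lt_of_block_lt (by simp [block_max, block_of_mem_right hy])

theorem glue_lt_max_of_isBelowCut (hx : IsBelowCut p s U m x) :
    glue p s U m qL qR x < glue p s U m qL qR m :=
  glue_lt_of_block_lt (by simp [block_max, block_of_isBelowCut hx])

theorem glue_max_lt_of_not_isBelowCut (hx : x ∈ left p s m) (hbelow : ¬ IsBelowCut p s U m x) :
    glue p s U m qL qR m < glue p s U m qL qR x :=
  glue_lt_of_block_lt (by simp [block_max, block_of_mem_left hx hbelow])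

end Glue

section GlueExtension

variable {p : α → β} {s : Finset α} {U : Set α} {m a b c x y : α} {qL qR : α → List ℕ}

theorem Prec.mem_right_of_notMem_left (hxy : Prec p s x y) (hx : x ∉ left p s m) :
    y ∈ right p s m :=
  mem_right.2 ⟨hxy.2.1, (le_of_not_gt fun h => hx (mem_left.2 ⟨hxy.1, h⟩)).trans_lt hxy.2.2.1⟩

theorem glue_injOn (hp : Injective p) (hL : Set.InjOn qL (left p s m))
    (hR : Set.InjOn qR (right p s m)) : Set.InjOn (glue p s U m qL qR) s := by
  intro x hx y hy hxy
  have hb := (List.cons_eq_cons.1 hxy).1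
  rcases mem_left_or_eq_or_mem_right (m := m) hp hx with hxL | rfl | hxR
  · have hyL := mem_left_of_block_eq hp hxL hy hb
    rw [glue_of_mem_left hxL, glue_of_mem_left hyL] at hxy
    exact hL hxL hyL (List.cons_eq_cons.1 hxy).2
  · exact ((block_eq_one_iff hp hy).1 (hb ▸ block_max)).symm
  · have hyR := mem_right_of_three_le_block hp hy (hb ▸ (block_of_mem_right hxR).ge)
    rw [glue_of_mem_right hxR, glue_of_mem_right hyR] at hxy
    exact hR hxR hyR (List.cons_eq_cons.1 hxy).2

theorem glue_lt_of_prec (hp : Injective p) (hm : IsGreatest (s : Set α) m)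
    (hL : ∀ ⦃x y⦄, Prec p (left p s m) x y → qL x < qL y)
    (hR : ∀ ⦃x y⦄, Prec p (right p s m) x y → qR x < qR y) (hxy : Prec p s x y) :
    glue p s U m qL qR x < glue p s U m qL qR y := by
  by_cases hxL : x ∈ left p s m
  · rcases mem_left_or_eq_or_mem_right (m := m) hp hxy.2.1 with hyL | rfl | hyR
    · exact glue_lt_of_mem_left hxL hyL (·.of_prec hxL hxy)
        (hL (prec_left_iff.2 ⟨hxL, hyL, hxy⟩))
    · exact absurd hxy (not_prec_max hm.2)
    · exact glue_lt_of_mem_left_of_mem_right hxL hyR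
  · have hyR := hxy.mem_right_of_notMem_left hxL
    rcases mem_left_or_eq_or_mem_right (m := m) hp hxy.1 with hxL' | rfl | hxR
    · exact absurd hxL' hxL
    · exact glue_max_lt_of_mem_right hyR
    · exact (glue_lt_glue_of_mem_right hxR hyR).2 (hR (prec_right_iff.2 ⟨hxR, hyR, hxy⟩))

theorem glue_no231_of_isBelowCut (hp : Injective p) (hm : IsGreatest (s : Set α) m)
    (hL : IsExtension231 p (left p s m) (upperLeft p s U m) qL) (ha : a ∈ s)
    (hb : IsBelowCut p s U m b) (hab : a < b) (hbc : b < c)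
    (hbc' : glue p s U m qL qR b < glue p s U m qL qR c) :
    ¬ glue p s U m qL qR c < glue p s U m qL qR a := by
  intro hca
  have haL : a ∈ left p s m := by
    rcases mem_left_or_eq_or_mem_right (m := m) hp ha with haL | rfl | haR
    · exact haL
    · exact absurd (hab.trans (lt_of_mem_left hm.2 hb.mem_left)) (lt_irrefl _)
    · exact absurd (hb.lt_of_mem_right hm haR) hab.not_gt
  have ha0 := block_of_isBelowCut (hb.of_le haL hab.le)
  have hc0 : block p s U m c = 0 := Nat.le_zero.1 (ha0 ▸ block_le_of_glue_lt hca)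
  have hcL := (isBelowCut_of_block_eq_zero hc0).mem_left
  have hb0 := block_of_isBelowCut hb
  exact hL.no231 haL hb.mem_left hcL hab hbc
    ((glue_lt_glue_of_mem_left hb.mem_left hcL (hb0.trans hc0.symm)).1 hbc')
    ((glue_lt_glue_of_mem_left hcL haL (hc0.trans ha0.symm)).1 hca)

theorem glue_no231_of_not_isBelowCut (hp : Injective p) (hm : IsGreatest (s : Set α) m)
    (hU : IsUpperSet U) (hs : NoChain231 p s) (h : NoRise p s U)
    (hL : IsExtension231 p (left p s m) (upperLeft p s U m) qL)
    (hR : IsExtension231 p (right p s m) U qR) (ha : a ∈ s) (hc : c ∈ s)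
    (hbL : b ∈ left p s m) (hb : ¬ IsBelowCut p s U m b) (hab : a < b) (hbc : b < c)
    (hbc' : glue p s U m qL qR b < glue p s U m qL qR c) :
    ¬ glue p s U m qL qR c < glue p s U m qL qR a := by
  intro hca
  have hb2 := block_of_mem_left hbL hb
  have hbc_block := block_le_of_glue_lt hbc'
  have hca_block := block_le_of_glue_lt hca
  rcases mem_left_or_eq_or_mem_right (m := m) hp hc with hcL | rfl | hcR
  · have hc2 : block p s U m c = 2 :=
      le_antisymm (block_le_two_of_mem_left hcL) (hb2 ▸ hbc_block)
    have hbc'' := (glue_lt_glue_of_mem_left hbL hcL (hb2.trans hc2.symm)).1 hbc'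
    rcases mem_left_or_eq_or_mem_right (m := m) hp ha with haL | rfl | haR
    · have ha2 := le_antisymm (block_le_two_of_mem_left haL) (hc2 ▸ hca_block)
      exact hL.no231 haL hbL hcL hab hbc hbc''
        ((glue_lt_glue_of_mem_left hcL haL (hc2.trans ha2.symm)).1 hca)
    · exact absurd (hab.trans (lt_of_mem_left hm.2 hbL)) (lt_irrefl _)
    · exact (hL.lt_of_mem_upper hbL hcL (.inr ⟨a, haR, hab⟩) hbc).not_gt hbc''
  · simp [block_max, hb2] at hbc_block
  · have haR := mem_right_of_three_le_block hp ha (block_of_mem_right hcR ▸ hca_block)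
    exact ((glue_lt_glue_of_mem_right hcR haR).1 hca).not_gt <|
      hR.lt_of_isCut (isCut_right_of_mem_left hm hs h hU hbL) haR hcR hab.le hbc

theorem glue_no231_of_mem_right (hp : Injective p) (hR : IsExtension231 p (right p s m) U qR)
    (ha : a ∈ s) (hc : c ∈ s) (hb : b ∈ right p s m) (hab : a < b) (hbc : b < c)
    (hbc' : glue p s U m qL qR b < glue p s U m qL qR c) :
    ¬ glue p s U m qL qR c < glue p s U m qL qR a := by
  intro hca
  have hcR := mem_right_of_three_le_block hp hc <| block_of_mem_right hb ▸ block_le_of_glue_lt hbc'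
  have haR := mem_right_of_three_le_block hp ha <| block_of_mem_right hcR ▸ block_le_of_glue_lt hca
  exact hR.no231 haR hb hcR hab hbc ((glue_lt_glue_of_mem_right hb hcR).1 hbc')
    ((glue_lt_glue_of_mem_right hcR haR).1 hca)

theorem glue_lt_of_mem_upper (hp : Injective p) (hm : IsGreatest (s : Set α) m)
    (h : NoRise p s U) (hL : IsExtension231 p (left p s m) (upperLeft p s U m) qL)
    (hR : IsExtension231 p (right p s m) U qR) (hx : x ∈ s) (hy : y ∈ s) (hxU : x ∈ U)
    (hxy : x < y) : glue p s U m qL qR y < glue p s U m qL qR x := by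
  have hx_not_below (hx' : IsBelowCut p s U m x) : False := hx'.notMem hm.1 hxU
  rcases mem_left_or_eq_or_mem_right (m := m) hp hx with hxL | rfl | hxR
  · rcases mem_left_or_eq_or_mem_right (m := m) hp hy with hyL | rfl | hyR
    · exact glue_lt_of_mem_left hyL hxL (hx_not_below · |>.elim)
        (hL.lt_of_mem_upper hxL hyL (.inl hxU) hxy)
    · exact glue_max_lt_of_not_isBelowCut hxL hx_not_below
    · exact absurd hxy (h (prec_of_mem_left_of_mem_right hm hxL hyR) hxU)
  · exact absurd (hm.2 hy) hxy.not_ge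
  · rcases mem_left_or_eq_or_mem_right (m := m) hp hy with hyL | rfl | hyR
    · exact glue_lt_of_mem_left_of_mem_right hyL hxR
    · exact glue_max_lt_of_mem_right hxR
    · exact (glue_lt_glue_of_mem_right hyR hxR).2 (hR.lt_of_mem_upper hxR hyR hxU hxy)

theorem glue_lt_of_isCut (hp : Injective p) (hm : IsGreatest (s : Set α) m)
    (hL : IsExtension231 p (left p s m) (upperLeft p s U m) qL)
    (hR : IsExtension231 p (right p s m) U qR) (hc : IsCut p s U c) (hx : x ∈ s) (hy : y ∈ s)
    (hxc : x ≤ c) (hcy : c < y) : glue p s U m qL qR x < glue p s U m qL qR y := by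
  rcases mem_left_or_eq_or_mem_right (m := m) hp hx with hxL | rfl | hxR
  · rcases mem_left_or_eq_or_mem_right (m := m) hp hy with hyL | rfl | hyR
    · have hx_below : IsBelowCut p s U m x :=
        ⟨hxL, c, hcy.trans (lt_of_mem_left hm.2 hyL), hc, hxc⟩
      exact glue_lt_of_mem_left hxL hyL (fun _ => hx_below)
        (hL.lt_of_isCut (hc.left hm) hxL hyL hxc hcy)
    · exact glue_lt_max_of_isBelowCut ⟨hxL, c, hcy, hc, hxc⟩
    · exact glue_lt_of_mem_left_of_mem_right hxL hyR
  · exact absurd (hm.2 hy) (hxc.trans_lt hcy).not_ge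
  · rcases mem_left_or_eq_or_mem_right (m := m) hp hy with hyL | rfl | hyR
    · exact absurd hcy (hc.not_prec (prec_of_mem_left_of_mem_right hm hyL hxR) hxc)
    · exact absurd hcy (hc.not_prec (prec_max_of_mem_right hm hxR) hxc)
    · exact (glue_lt_glue_of_mem_right hxR hyR).2
        (hR.lt_of_isCut (hc.mono right_subset) hxR hyR hxc hcy)

theorem isExtension231_glue (hp : Injective p) (hm : IsGreatest (s : Set α) m)
    (hU : IsUpperSet U) (hs : NoChain231 p s) (h : NoRise p s U)
    (hL : IsExtension231 p (left p s m) (upperLeft p s U m) qL)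
    (hR : IsExtension231 p (right p s m) U qR) :
    IsExtension231 p s U (glue p s U m qL qR) where
  injOn := glue_injOn hp hL.injOn hR.injOn
  lt_of_prec _ _ := glue_lt_of_prec hp hm hL.lt_of_prec hR.lt_of_prec
  no231 a b c ha hb hc hab hbc := by
    rcases mem_left_or_eq_or_mem_right (m := m) hp hb with hbL | rfl | hbR
    · by_cases hbelow : IsBelowCut p s U m b
      · exact glue_no231_of_isBelowCut hp hm hL ha hbelow hab hbc
      · exact glue_no231_of_not_isBelowCut hp hm hU hs h hL hR ha hc hbL hbelow hab hbc
    · exact absurd (hm.2 hc) hbc.not_ge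
    · exact glue_no231_of_mem_right hp hR ha hc hbR hab hbc
  lt_of_mem_upper _ _ := glue_lt_of_mem_upper hp hm h hL hR
  lt_of_isCut _ hc _ _ := glue_lt_of_isCut hp hm hL hR hc

end GlueExtension

theorem isExtension231_empty {p : α → β} {U : Set α} {q : α → List ℕ} :
    IsExtension231 p ∅ U q where
  injOn := by simp
  lt_of_prec _ _ h := absurd h.1 (notMem_empty _)
  no231 _ _ _ ha := absurd ha (notMem_empty _)
  lt_of_mem_upper _ _ hx := absurd hx (notMem_empty _)
  lt_of_isCut _ _ _ _ hx := absurd hx (notMem_empty _)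

theorem exists_isExtension231 {p : α → β} (hp : Injective p) (s : Finset α) (U : Set α)
    (hU : IsUpperSet U) (hs : NoChain231 p s) (h : NoRise p s U) :
    ∃ q, IsExtension231 p s U q := by
  induction s using Finset.strongInduction generalizing U with
  | H s ih =>
  rcases s.eq_empty_or_nonempty with rfl | hne
  · exact ⟨fun _ => [], isExtension231_empty⟩
  have hm := s.isGreatest_max' hne
  obtain ⟨qL, hqL⟩ := ih (left p s _) (left_ssubset hm.1) _ (isUpperSet_upperLeft hU)
    (hs.mono left_subset) (noRise_left hm hs h)
  obtain ⟨qR, hqR⟩ := ih (right p s _) (right_ssubset hm.1) U hU (hs.mono right_subset)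
    (h.mono right_subset)
  exact ⟨_, isExtension231_glue hp hm hU hs h hqL hqR⟩

end PQ231

open Finset Function PQ231

section Permutations

variable {n : ℕ}

instance (τ : Equiv.Perm (Fin n)) : IsTrans (Fin n) (PQBase τ) where
  trans x y w := by
    rintro ⟨hxy, hxy'⟩ ⟨hyw, hyw'⟩
    refine ⟨hxy.trans hyw, ?_⟩
    rcases lt_trichotomy w x with hwx | rfl | hxw
    · exact .inl hwx
    · exact absurd (hxy.trans hyw) (lt_irrefl _)
    refine .inr ?_
    rcases hyw' with hwy | ⟨z, hyz, hzw, -, hwz⟩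
    · obtain hyx | ⟨z, hxz, hzy, -, hyz⟩ := hxy'
      · exact absurd (hwy.trans hyx) hxw.not_gt
      · exact ⟨z, hxz, hzy.trans hyw, hxw, hwy.trans hyz⟩
    · exact ⟨z, hxy.trans hyz, hzw, hxw, hwz⟩

theorem pq_eq_pqBase (τ : Equiv.Perm (Fin n)) : PQ τ = PQBase τ := Relation.transGen_eq_self

theorem prec_univ_iff {τ : Equiv.Perm (Fin n)} {x y : Fin n} :
    Prec τ.symm univ x y ↔ PQBase τ x y := by
  simp [Prec, PQBase]

theorem noChain231_of_not_hasChain {τ : Equiv.Perm (Fin n)} (h : ¬ HasChain p231 τ) :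
    NoChain231 τ.symm univ := by
  intro u v w huv hvw hwu huv'
  rw [prec_univ_iff] at huv hvw
  have huw := _root_.trans huv hvw
  refine h ⟨![u, v, w], fun i j hij => ?_, fun i j => ?_⟩
  · rw [pq_eq_pqBase]
    fin_cases i <;> fin_cases j <;> first | exact absurd hij (by decide) | assumption
  · have h231 : ∀ k : Fin 3, p231 k = ![1, 2, 0] k := fun k => rfl
    fin_cases i <;> fin_cases j <;> simp [h231] <;> order

theorem exists_perm_symm_lt_iff {γ : Type*} [LinearOrder γ] {q : Fin n → γ} (hq : Injective q) :
    ∃ σ : Equiv.Perm (Fin n), ∀ x y, σ.symm x < σ.symm y ↔ q x < q y := by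
  have hσ := (Tuple.monotone_sort q).strictMono_of_injective (hq.comp (Tuple.sort q).injective)
  refine ⟨Tuple.sort q, fun x y => ?_⟩
  simpa using (hσ.lt_iff_lt (a := (Tuple.sort q).symm x) (b := (Tuple.sort q).symm y)).symm

theorem Contains.exists_231 {σ : Equiv.Perm (Fin n)} (h : Contains p231 σ) :
    ∃ i j k : Fin n, i < j ∧ j < k ∧ σ k < σ i ∧ σ i < σ j := by
  obtain ⟨f, hf⟩ := h
  exact ⟨f 0, f 1, f 2, f.lt_iff_lt.2 (by decide), f.lt_iff_lt.2 (by decide),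
    (hf 2 0).1 (by decide), (hf 0 1).1 (by decide)⟩

end Permutations

theorem no_chain_231_linear_extension {n : ℕ} (τ : Equiv.Perm (Fin n)) (h : ¬ HasChain p231 τ) :
    ∃ σ : Equiv.Perm (Fin n), Allowable σ τ ∧ ¬ Contains p231 σ := by
  obtain ⟨q, hq⟩ := exists_isExtension231 τ.symm.injective univ ∅ isUpperSet_empty
    (noChain231_of_not_hasChain h) fun _ _ _ hx => hx.elim
  obtain ⟨σ, hσ⟩ := exists_perm_symm_lt_iff (q := q) fun x y =>
    hq.injOn (mem_univ x) (mem_univ y)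
  refine ⟨σ, fun x y hxy => (hσ x y).2 (hq.lt_of_prec ?_), fun hσ231 => ?_⟩
  · rwa [prec_univ_iff, ← pq_eq_pqBase]
  · obtain ⟨i, j, k, hij, hjk, hσki, hσij⟩ := hσ231.exists_231
    exact hq.no231 (mem_univ _) (mem_univ _) (mem_univ _) hσki hσij
      ((hσ _ _).1 (by simpa using hij)) ((hσ _ _).1 (by simpa using hjk))
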